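/- Let (a_k)_{k ≥ 0} be real numbers with a_k ≥ 0 for all k, ∑_k a_k = 1 and a_0 > 0. Let J be the matrix on ℕ defined by J i j = a_{j−i+1} if j + 1 ≥ i and J i j = 0 otherwise (so its rows, including row 0, are shifted copies of (a_1, a_2, …) with a_0 on the subdiagonal), and set α_N = det(Id − J_{[0,N]}) for N ≥ 0, with α_{−1} = 1. Let m = ∑_k k·a_k ∈ [0,∞]. Then a_0 · α_{N−1} / α_N → 1 as N → ∞ if and only if m ≤ 1. (This is the recurrence criterion for the repair-shop chain X_{n+1} = (X_n − 1)_+ + Z_{n+1} with i.i.d. steps Z of law (a_k): the chain is recurrent iff m ≤ 1.) -/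

import Mathlib

open scoped ENNReal

/-- `detOneSub M n = det(Id − M_{[0,n−1]})`, with `detOneSub M 0 = 1`
(convention `α_{−1} = 1`). -/
noncomputable def detOneSub (M : ℕ → ℕ → ℝ) (n : ℕ) : ℝ :=
  Matrix.det (1 - Matrix.of fun i j : Fin n => M i.1 j.1)

/-- The matrix `J` associated with the step distribution `a`:
`J i j = a_{j−i+1}` if `j + 1 ≥ i` and `0` otherwise. -/
noncomputable def Jmat (a : ℕ → ℝ) : ℕ → ℕ → ℝ :=
  fun i j => if i ≤ j + 1 then a (j + 1 - i) else 0

/-!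
Write `A(z) = ∑ aₖ zᵏ` and `sₙ = [zⁿ] 1 / (A(z) − z)`. The identity `A(z) · S(z) = 1 + z S(z)`
says that `(s_{N−i})_{0 ≤ i ≤ N}` solves `(Id − J_{[0,N]}) v = a₀ s_{N+1} e₀`; as this matrix is
Hessenberg with subdiagonal `−a₀`, Cramer's rule gives `α_N = a₀^{N+2} s_{N+1}`, so the ratio in
question is `s_N / s_{N+1}`.

With the tails `rⱼ = ∑_{k>j} aₖ` one has `A(z) − z = (1 − z)(1 − R(z))` and `R(1) = m`, so the
increments `uₙ = sₙ − s_{n−1}` form the renewal sequence `U = 1 / (1 − R)`, which is nonnegative.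
If `m ≤ 1` then `uₙ ≤ 1 / a₀`, and an increasing sequence with bounded increments has
`s_N / s_{N+1} → 1`. Conversely, if `s_N / s_{N+1} → 1` then `∑ sₙ xⁿ`, hence `U(x)`, converges
for `0 < x < 1`; `U(x) (1 − R(x)) = 1` with `U(x) > 0` forces `R(x) < 1`, and `x → 1` gives `m ≤ 1`.
-/

open Finset hiding mk
open Filter Topology PowerSeries Matrix

theorem Matrix.det_mul_last_eq_of_mulVec_eq_single {R : Type*} [CommRing R] {n : ℕ}
    (B : Matrix (Fin (n + 1)) (Fin (n + 1)) R)
    (hB : (B.submatrix Fin.succ Fin.castSucc).IsUpperTriangular)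
    {v : Fin (n + 1) → R} {c : R} (hv : B *ᵥ v = Pi.single 0 c) :
    B.det * v (Fin.last n) = (-1) ^ n * c * ∏ i : Fin n, B i.succ i.castSucc := by
  have hminor : (B.updateCol (Fin.last n) (Pi.single 0 c)).submatrix Fin.succ Fin.castSucc
      = B.submatrix Fin.succ Fin.castSucc := by
    ext i j
    simp [(Fin.castSucc_lt_last j).ne]
  have hcramer : B.cramer (Pi.single 0 c) = B.det • v := by
    rw [← hv, cramer_eq_adjugate_mulVec, mulVec_mulVec, adjugate_mul, smul_mulVec, one_mulVec]
  rw [← smul_eq_mul, ← Pi.smul_apply, ← hcramer, cramer_apply, det_succ_column _ (Fin.last n),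
    Fin.sum_univ_succ, sum_eq_zero (fun i _ ↦ by simp), Fin.succAbove_zero,
    Fin.succAbove_last, hminor, det_of_isUpperTriangular hB]
  simp

theorem PowerSeries.tsum_coeff_mul_mul_pow {R : Type*} [NormedCommRing R] [CompleteSpace R]
    {p q : R⟦X⟧} {x : R} (hp : Summable fun n ↦ ‖coeff n p * x ^ n‖)
    (hq : Summable fun n ↦ ‖coeff n q * x ^ n‖) :
    ∑' n, coeff n (p * q) * x ^ n
      = (∑' n, coeff n p * x ^ n) * ∑' n, coeff n q * x ^ n := by
  rw [tsum_mul_tsum_eq_tsum_sum_range_of_summable_norm hp hq]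
  refine tsum_congr fun n ↦ ?_
  rw [coeff_mul, Nat.sum_antidiagonal_eq_sum_range_succ_mk, sum_mul]
  refine sum_congr rfl fun k hk ↦ ?_
  rw [mul_mul_mul_comm, ← pow_add, Nat.add_sub_cancel' (mem_range_succ_iff.mp hk)]

theorem tendsto_div_succ_of_monotone_of_sub_le {f : ℕ → ℝ} (hf : Monotone f) (h0 : 0 < f 0)
    {C : ℝ} (hC : ∀ n, f (n + 1) - f n ≤ C) : Tendsto (fun n ↦ f n / f (n + 1)) atTop (𝓝 1) := by
  have hpos : ∀ n, 0 < f n := fun n ↦ h0.trans_le (hf n.zero_le)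
  rcases tendsto_atTop_of_monotone hf with htop | ⟨l, hl⟩
  · have hsucc := htop.comp (tendsto_add_atTop_nat 1)
    have hgap : Tendsto (fun n ↦ (f (n + 1) - f n) / f (n + 1)) atTop (𝓝 0) :=
      squeeze_zero (fun n ↦ div_nonneg (sub_nonneg.mpr (hf n.le_succ)) (hpos _).le)
        (fun n ↦ div_le_div_of_nonneg_right (hC n) (hpos _).le)
        (tendsto_const_nhds.div_atTop hsucc)
    convert (tendsto_const_nhds (x := (1 : ℝ))).sub hgap using 2 with n
    · field_simp [(hpos (n + 1)).ne']
      ring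
    · simp
  · have hl0 : l ≠ 0 := (lt_of_lt_of_le h0 (hf.ge_of_tendsto hl 0)).ne'
    have := hl.div (hl.comp (tendsto_add_atTop_nat 1)) hl0
    rwa [div_self hl0] at this

theorem summable_mul_pow_of_tendsto_div_succ {f : ℕ → ℝ} (hf : ∀ n, 0 < f n)
    (h : Tendsto (fun n ↦ f n / f (n + 1)) atTop (𝓝 1)) {x : ℝ} (hx0 : 0 < x) (hx1 : x < 1) :
    Summable fun n ↦ f n * x ^ n := by
  refine summable_of_ratio_test_tendsto_lt_one hx1
    (Eventually.of_forall fun n ↦ (mul_pos (hf n) (pow_pos hx0 n)).ne') ?_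
  have : Tendsto (fun n ↦ x / (f n / f (n + 1))) atTop (𝓝 (x / 1)) :=
    tendsto_const_nhds.div h one_ne_zero
  rw [div_one] at this
  refine this.congr fun n ↦ ?_
  rw [Real.norm_of_nonneg (mul_pos (hf _) (pow_pos hx0 _)).le,
    Real.norm_of_nonneg (mul_pos (hf _) (pow_pos hx0 _)).le, pow_succ]
  field_simp [(hf n).ne', (hf (n + 1)).ne', hx0.ne']

noncomputable def renewalSeq (r : ℕ → ℝ) (n : ℕ) : ℝ := coeff n (1 - mk r)⁻¹

section Renewal

variable {r : ℕ → ℝ}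

theorem mk_renewalSeq : mk (renewalSeq r) = (1 - mk r)⁻¹ := by
  ext n; simp [renewalSeq]

theorem renewalSeq_zero : renewalSeq r 0 = (1 - r 0)⁻¹ := by
  rw [renewalSeq, coeff_zero_eq_constantCoeff_apply, constantCoeff_inv]
  simp

theorem mk_mul_mk_renewalSeq (hr0 : r 0 ≠ 1) :
    mk r * mk (renewalSeq r) = mk (renewalSeq r) - 1 := by
  have h : (1 - mk r) * (1 - mk r)⁻¹ = 1 :=
    PowerSeries.mul_inv_cancel _ (by simpa [sub_eq_zero] using hr0.symm)
  rw [mk_renewalSeq]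
  linear_combination -h

theorem renewalSeq_eq (hr0 : r 0 ≠ 1) (n : ℕ) :
    renewalSeq r n
      = (if n = 0 then 1 else 0) + ∑ i ∈ range (n + 1), r i * renewalSeq r (n - i) := by
  have := congrArg (coeff n) (mk_mul_mk_renewalSeq hr0)
  rw [coeff_mul, Nat.sum_antidiagonal_eq_sum_range_succ_mk] at this
  simp only [coeff_mk, map_sub, coeff_one] at this
  rw [this]; ring

theorem one_sub_mul_renewalSeq (hr0 : r 0 ≠ 1) (n : ℕ) :
    (1 - r 0) * renewalSeq r n
      = (if n = 0 then 1 else 0) + ∑ i ∈ range n, r (i + 1) * renewalSeq r (n - 1 - i) := by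
  have h := renewalSeq_eq hr0 n
  rw [sum_range_succ'] at h
  have : ∀ i ∈ range n,
      r (i + 1) * renewalSeq r (n - (i + 1)) = r (i + 1) * renewalSeq r (n - 1 - i) :=
    fun i _ ↦ by rw [Nat.sub_sub, add_comm 1 i]
  rw [sum_congr rfl this, Nat.sub_zero] at h
  linear_combination h

theorem renewalSeq_nonneg (hr : ∀ j, 0 ≤ r j) (hr0 : r 0 < 1) (n : ℕ) : 0 ≤ renewalSeq r n := by
  induction n using Nat.strong_induction_on with
  | _ n ih =>
    have h := one_sub_mul_renewalSeq hr0.ne n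
    have : 0 ≤ (1 - r 0) * renewalSeq r n := by
      rw [h]
      refine add_nonneg (by positivity) (sum_nonneg fun i hi ↦ mul_nonneg (hr _) (ih _ ?_))
      have := mem_range.mp hi; omega
    exact nonneg_of_mul_nonneg_right this (by linarith)

theorem renewalSeq_le (hr : ∀ j, 0 ≤ r j) (hr0 : r 0 < 1)
    (hsum : ∀ n, ∑ j ∈ range n, r j ≤ 1) (n : ℕ) : renewalSeq r n ≤ (1 - r 0)⁻¹ := by
  induction n using Nat.strong_induction_on with
  | _ n ih =>
    rcases Nat.eq_zero_or_pos n with rfl | hn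
    · rw [renewalSeq_zero]
    have hpos : 0 < 1 - r 0 := by linarith
    rw [← one_div, le_div_iff₀' hpos, one_sub_mul_renewalSeq hr0.ne, if_neg hn.ne',
      zero_add]
    calc ∑ i ∈ range n, r (i + 1) * renewalSeq r (n - 1 - i)
        ≤ ∑ i ∈ range n, r (i + 1) * (1 - r 0)⁻¹ :=
          sum_le_sum fun i hi ↦ mul_le_mul_of_nonneg_left
            (ih _ (by have := mem_range.mp hi; omega)) (hr _)
      _ ≤ (1 - r 0) * (1 - r 0)⁻¹ := by
          rw [← sum_mul]
          refine mul_le_mul_of_nonneg_right ?_ (by positivity)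
          have := hsum (n + 1)
          rw [sum_range_succ'] at this
          linarith
      _ = 1 := mul_inv_cancel₀ hpos.ne'

theorem tsum_mul_pow_lt_one_of_summable_renewalSeq (hr : ∀ j, 0 ≤ r j) (hr0 : r 0 < 1) {x : ℝ}
    (hx : 0 ≤ x) (hrx : Summable fun j ↦ r j * x ^ j)
    (hux : Summable fun n ↦ renewalSeq r n * x ^ n) :
    ∑' j, r j * x ^ j < 1 := by
  have hU : 0 < ∑' n, renewalSeq r n * x ^ n := by
    refine hux.tsum_pos (fun n ↦ mul_nonneg (renewalSeq_nonneg hr hr0 n) (pow_nonneg hx n)) 0 ?_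
    rw [renewalSeq_zero, pow_zero, mul_one, inv_pos, sub_pos]
    exact hr0
  have hcoeff : HasSum (fun n ↦ coeff n (mk (renewalSeq r) - 1) * x ^ n)
      (∑' n, renewalSeq r n * x ^ n - 1) := by
    refine (hux.hasSum.sub (hasSum_ite_eq 0 (1 : ℝ))).congr_fun fun n ↦ ?_
    rcases eq_or_ne n 0 with rfl | hn <;> simp [*]
  have h := tsum_coeff_mul_mul_pow (p := mk r) (q := mk (renewalSeq r)) (x := x)
    (by simpa using summable_norm_iff.mpr hrx) (by simpa using summable_norm_iff.mpr hux)
  rw [mk_mul_mk_renewalSeq hr0.ne, hcoeff.tsum_eq] at h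
  simp only [coeff_mk] at h
  nlinarith

end Renewal

namespace RepairShop

noncomputable def tail (a : ℕ → ℝ) (j : ℕ) : ℝ := 1 - ∑ k ∈ range (j + 1), a k

noncomputable def detSeq (a : ℕ → ℝ) (n : ℕ) : ℝ := coeff n (mk a - X)⁻¹

variable {a : ℕ → ℝ}

theorem tail_zero : tail a 0 = 1 - a 0 := by simp [tail]

theorem tail_nonneg (hnn : ∀ k, 0 ≤ a k) (hsum : HasSum a 1) (j : ℕ) : 0 ≤ tail a j :=
  sub_nonneg.mpr (sum_le_hasSum _ (fun k _ ↦ hnn k) hsum)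

theorem tail_le_one (hnn : ∀ k, 0 ≤ a k) (j : ℕ) : tail a j ≤ 1 :=
  sub_le_self _ (sum_nonneg fun k _ ↦ hnn k)

theorem mk_sub_X_eq : mk a - X = (1 - X) * (1 - mk (tail a)) := by
  have h : (1 - X) * mk (tail a) = 1 - mk a := by
    ext (_ | n)
    · simp [tail]
    · simp [sub_mul, tail, sum_range_succ]
  linear_combination h

theorem constantCoeff_mk_sub_X : constantCoeff (mk a - X) = a 0 := by simp

theorem detSeq_zero : detSeq a 0 = (a 0)⁻¹ := by
  simp [detSeq]

theorem mk_detSeq : mk (detSeq a) = (mk a - X)⁻¹ := by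
  ext n; simp [detSeq]

theorem mk_mul_mk_detSeq (ha0 : a 0 ≠ 0) : mk a * mk (detSeq a) = 1 + X * mk (detSeq a) := by
  have h := PowerSeries.mul_inv_cancel (mk a - X) (by rwa [constantCoeff_mk_sub_X])
  rw [mk_detSeq]
  linear_combination h

theorem sum_mul_detSeq (ha0 : a 0 ≠ 0) (n : ℕ) :
    ∑ k ∈ range (n + 2), a k * detSeq a (n + 1 - k) = detSeq a n := by
  have := congrArg (coeff (n + 1)) (mk_mul_mk_detSeq ha0)
  rw [coeff_mul, Nat.sum_antidiagonal_eq_sum_range_succ_mk, map_add, coeff_succ_X_mul,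
    coeff_one, if_neg n.succ_ne_zero, zero_add] at this
  simpa using this

theorem detSeq_eq_sum_renewalSeq (ha0 : a 0 ≠ 0) (n : ℕ) :
    detSeq a n = ∑ k ∈ range (n + 1), renewalSeq (tail a) k := by
  have hS : (mk a - X)⁻¹ = (1 - mk (tail a))⁻¹ * mk 1 := by
    refine ((PowerSeries.eq_inv_iff_mul_eq_one (by rwa [constantCoeff_mk_sub_X])).mpr ?_).symm
    calc (1 - mk (tail a))⁻¹ * mk 1 * (mk a - X)
        = (mk 1 * (1 - X)) * ((1 - mk (tail a))⁻¹ * (1 - mk (tail a))) := by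
          rw [mk_sub_X_eq]; ring
      _ = 1 := by
          rw [mk_one_mul_one_sub_eq_one, PowerSeries.inv_mul_cancel _ (by simpa [tail_zero]),
            one_mul]
  rw [detSeq, hS, coeff_mul, Nat.sum_antidiagonal_eq_sum_range_succ_mk]
  simp [renewalSeq]

theorem sum_Jmat_mul_detSeq (ha0 : a 0 ≠ 0) {N i : ℕ} (hi : i ≤ N) :
    ∑ k ∈ range (N + 1), Jmat a i k * detSeq a (N - k)
      = detSeq a (N - i) - if i = 0 then a 0 * detSeq a (N + 1) else 0 := by
  obtain ⟨m, rfl⟩ : ∃ m, N = i + m := ⟨N - i, by omega⟩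
  have hshift : ∑ k ∈ range (i + m + 2),
      (if i ≤ k then a (k - i) * detSeq a (i + m + 1 - k) else 0) = detSeq a m := by
    rw [← sum_mul_detSeq ha0 m, show i + m + 2 = i + (m + 2) by ring, sum_range_add,
      sum_eq_zero fun k hk ↦ if_neg (by simpa using hk), zero_add]
    refine sum_congr rfl fun t _ ↦ ?_
    rw [if_pos (Nat.le_add_right i t), Nat.add_sub_cancel_left]
    congr 2
    omega
  have hJ : ∀ k, Jmat a i k * detSeq a (i + m - k)
      = if i ≤ k + 1 then a (k + 1 - i) * detSeq a (i + m + 1 - (k + 1)) else 0 := by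
    intro k
    simp [Jmat]
  rw [Nat.add_sub_cancel_left, ← hshift, sum_range_succ' _ (i + m + 1),
    sum_congr rfl fun k _ ↦ hJ k]
  rcases eq_or_ne i 0 with rfl | hi0 <;> simp [*]

theorem detOneSub_Jmat (ha0 : a 0 ≠ 0) (n : ℕ) :
    detOneSub (Jmat a) n = a 0 ^ (n + 1) * detSeq a n := by
  rcases n with _ | N
  · simp [detOneSub, detSeq, ha0]
  set B : Matrix (Fin (N + 1)) (Fin (N + 1)) ℝ := 1 - of fun i j : Fin (N + 1) ↦ Jmat a i j
  have hB : (B.submatrix Fin.succ Fin.castSucc).IsUpperTriangular := by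
    intro i j (hji : j < i)
    have : (j : ℕ) < i := hji
    simp [B, Jmat, Fin.ext_iff, show (i : ℕ) + 1 ≠ j by omega, hji.not_ge]
  have hv : B *ᵥ (fun i ↦ detSeq a (N - i)) = Pi.single 0 (a 0 * detSeq a (N + 1)) := by
    ext i
    simp only [B, sub_mulVec, one_mulVec, Pi.sub_apply]
    simp only [mulVec, dotProduct, of_apply]
    rw [Fin.sum_univ_eq_sum_range (fun k ↦ Jmat a i k * detSeq a (N - k)),
      sum_Jmat_mul_detSeq ha0 (Nat.lt_succ_iff.mp i.2)]
    rcases eq_or_ne i 0 with rfl | hi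
    · simp
    · simp [hi]
  have hdiag : ∀ i : Fin N, B i.succ i.castSucc = -a 0 := by
    intro i
    simp [B, Jmat, Fin.ext_iff]
  have := det_mul_last_eq_of_mulVec_eq_single B hB hv
  simp only [hdiag, prod_const, card_univ, Fintype.card_fin, Fin.val_last, Nat.sub_self,
    detSeq_zero] at this
  have hsign : (-1 : ℝ) ^ N * (-a 0) ^ N = a 0 ^ N := by rw [← mul_pow]; ring
  change B.det = _
  field_simp at this
  linear_combination this + a 0 ^ 2 * detSeq a (N + 1) * hsign

theorem hasSum_ite_lt_tail (hsum : HasSum a 1) (j : ℕ) :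
    HasSum (fun k ↦ if j < k then a k else 0) (tail a j) := by
  have hhead : HasSum (fun k ↦ if k ∈ range (j + 1) then a k else 0)
      (∑ k ∈ range (j + 1), a k) := by
    have := hasSum_sum_of_ne_finset_zero (L := .unconditional ℕ) (s := range (j + 1))
      (f := fun k ↦ if k ∈ range (j + 1) then a k else 0) fun k hk ↦ if_neg hk
    rwa [sum_congr rfl fun k hk ↦ if_pos hk] at this
  refine (hsum.sub hhead).congr_fun fun k ↦ ?_
  by_cases hk : j < k
  · simp [hk, not_le.mpr hk]
  · simp [hk, not_lt.mp hk]

theorem tsum_natCast_mul_eq_tsum_tail (hnn : ∀ k, 0 ≤ a k) (hsum : HasSum a 1) :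
    ∑' k : ℕ, (k : ℝ≥0∞) * ENNReal.ofReal (a k) = ∑' j, ENNReal.ofReal (tail a j) := by
  have hk : ∀ k : ℕ, (k : ℝ≥0∞) * ENNReal.ofReal (a k)
      = ∑' j : ℕ, if j < k then ENNReal.ofReal (a k) else 0 := by
    intro k
    rw [tsum_eq_sum (s := range k) fun j hj ↦ if_neg (by simpa using hj),
      sum_congr rfl fun j hj ↦ if_pos (mem_range.mp hj)]
    simp
  have hj : ∀ j,
      ENNReal.ofReal (tail a j) = ∑' k : ℕ, if j < k then ENNReal.ofReal (a k) else 0 := by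
    intro j
    rw [← (hasSum_ite_lt_tail hsum j).tsum_eq, ENNReal.ofReal_tsum_of_nonneg]
    · congr! 2 with k; split_ifs <;> simp
    · intro k; split_ifs <;> simp [hnn]
    · exact (hasSum_ite_lt_tail hsum j).summable
  simp_rw [hk, hj]
  exact ENNReal.tsum_comm

theorem tsum_natCast_mul_le_one_iff (hnn : ∀ k, 0 ≤ a k) (hsum : HasSum a 1) :
    ∑' k : ℕ, (k : ℝ≥0∞) * ENNReal.ofReal (a k) ≤ 1 ↔ ∀ n, ∑ j ∈ range n, tail a j ≤ 1 := by
  rw [tsum_natCast_mul_eq_tsum_tail hnn hsum]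
  have hofReal : ∀ n, ∑ j ∈ range n, ENNReal.ofReal (tail a j)
      = ENNReal.ofReal (∑ j ∈ range n, tail a j) :=
    fun n ↦ (ENNReal.ofReal_sum_of_nonneg fun j _ ↦ tail_nonneg hnn hsum j).symm
  refine ⟨fun h n ↦ ?_, fun h ↦ ENNReal.tsum_le_of_sum_range_le fun n ↦ ?_⟩
  · exact ENNReal.ofReal_le_one.mp ((hofReal n) ▸ (ENNReal.sum_le_tsum (range n)).trans h)
  · exact (hofReal n).symm ▸ ENNReal.ofReal_le_one.mpr (h n)

theorem detSeq_succ (ha0 : a 0 ≠ 0) (n : ℕ) :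
    detSeq a (n + 1) = detSeq a n + renewalSeq (tail a) (n + 1) := by
  rw [detSeq_eq_sum_renewalSeq ha0, detSeq_eq_sum_renewalSeq ha0, sum_range_succ _ (n + 1)]

section Distribution

variable (hnn : ∀ k, 0 ≤ a k) (hsum : HasSum a 1) (ha0 : 0 < a 0)
include hnn hsum ha0

theorem renewalSeq_tail_nonneg (n : ℕ) : 0 ≤ renewalSeq (tail a) n :=
  renewalSeq_nonneg (tail_nonneg hnn hsum) (by rw [tail_zero]; linarith) n

theorem monotone_detSeq : Monotone (detSeq a) :=
  monotone_nat_of_le_succ fun n ↦ by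
    rw [detSeq_succ ha0.ne']; linarith [renewalSeq_tail_nonneg hnn hsum ha0 (n + 1)]

theorem detSeq_pos (n : ℕ) : 0 < detSeq a n :=
  (inv_pos.mpr ha0).trans_le (detSeq_zero (a := a) ▸ monotone_detSeq hnn hsum ha0 n.zero_le)

theorem renewalSeq_tail_le_detSeq (n : ℕ) : renewalSeq (tail a) n ≤ detSeq a n := by
  rw [detSeq_eq_sum_renewalSeq ha0.ne']
  exact single_le_sum (fun k _ ↦ renewalSeq_tail_nonneg hnn hsum ha0 k) (self_mem_range_succ n)

theorem tendsto_detSeq_div_succ (h : ∀ n, ∑ j ∈ range n, tail a j ≤ 1) :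
    Tendsto (fun n ↦ detSeq a n / detSeq a (n + 1)) atTop (𝓝 1) := by
  refine tendsto_div_succ_of_monotone_of_sub_le (monotone_detSeq hnn hsum ha0)
    (detSeq_pos hnn hsum ha0 0) (C := (1 - tail a 0)⁻¹) fun n ↦ ?_
  rw [detSeq_succ ha0.ne', add_sub_cancel_left]
  exact renewalSeq_le (tail_nonneg hnn hsum) (by rw [tail_zero]; linarith) h (n + 1)

theorem sum_tail_le_one (h : Tendsto (fun n ↦ detSeq a n / detSeq a (n + 1)) atTop (𝓝 1))
    (K : ℕ) : ∑ j ∈ range K, tail a j ≤ 1 := by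
  have hr := tail_nonneg hnn hsum
  have hlt : ∀ x ∈ Set.Ioo (0 : ℝ) 1, ∑ j ∈ range K, tail a j * x ^ j < 1 := by
    rintro x ⟨hx0, hx1⟩
    have hrx : Summable fun j ↦ tail a j * x ^ j :=
      (summable_geometric_of_lt_one hx0.le hx1).of_nonneg_of_le
        (fun j ↦ mul_nonneg (hr j) (pow_nonneg hx0.le j))
        fun j ↦ mul_le_of_le_one_left (pow_nonneg hx0.le j) (tail_le_one hnn j)
    have hux : Summable fun n ↦ renewalSeq (tail a) n * x ^ n :=
      (summable_mul_pow_of_tendsto_div_succ (detSeq_pos hnn hsum ha0) h hx0 hx1).of_nonneg_of_le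
        (fun n ↦ mul_nonneg (renewalSeq_tail_nonneg hnn hsum ha0 n) (pow_nonneg hx0.le n))
        fun n ↦ mul_le_mul_of_nonneg_right (renewalSeq_tail_le_detSeq hnn hsum ha0 n)
          (pow_nonneg hx0.le n)
    exact (hrx.sum_le_tsum _ fun j _ ↦ mul_nonneg (hr j) (pow_nonneg hx0.le j)).trans_lt
      (tsum_mul_pow_lt_one_of_summable_renewalSeq hr (by rw [tail_zero]; linarith) hx0.le hrx hux)
  have hcont : Tendsto (fun x : ℝ ↦ ∑ j ∈ range K, tail a j * x ^ j) (𝓝[<] 1)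
      (𝓝 (∑ j ∈ range K, tail a j)) := by
    simpa using ((continuous_finsetSum _ fun j _ ↦
      continuous_const.mul (continuous_pow j)).tendsto (1 : ℝ)).mono_left nhdsWithin_le_nhds
  exact le_of_tendsto hcont
    (Filter.mem_of_superset (Ioo_mem_nhdsLT one_pos) fun x hx ↦ (hlt x hx).le)

end Distribution

end RepairShop

/-- Recurrence criterion for the repair-shop chain: with
`α_N = det(Id − J_{[0,N]})` (and `α_{−1} = 1`), one has
`a_0 · α_{N−1} / α_N → 1` as `N → ∞` iff the mean `m = ∑_k k·a_k` (in the extended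
reals) is `≤ 1`. -/
theorem repairShop_recurrence_criterion (a : ℕ → ℝ)
    (hnn : ∀ k, 0 ≤ a k) (hsum : HasSum a 1) (ha0 : 0 < a 0)
    (m : ℝ≥0∞) (hm : m = ∑' k : ℕ, (k : ℝ≥0∞) * ENNReal.ofReal (a k)) :
    Filter.Tendsto
        (fun N : ℕ => a 0 * detOneSub (Jmat a) N / detOneSub (Jmat a) (N + 1))
        Filter.atTop (nhds 1) ↔ m ≤ 1 := by
  have hratio : ∀ N, a 0 * detOneSub (Jmat a) N / detOneSub (Jmat a) (N + 1)
      = RepairShop.detSeq a N / RepairShop.detSeq a (N + 1) := by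
    intro N
    rw [RepairShop.detOneSub_Jmat ha0.ne', RepairShop.detOneSub_Jmat ha0.ne', ← mul_assoc,
      ← pow_succ', mul_div_mul_left _ _ (pow_ne_zero _ ha0.ne')]
  simp_rw [hratio, hm, RepairShop.tsum_natCast_mul_le_one_iff hnn hsum]
  exact ⟨RepairShop.sum_tail_le_one hnn hsum ha0, RepairShop.tendsto_detSeq_div_succ hnn hsum ha0⟩
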